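/- arXiv:1209.0438 — 4 statements merged into one kernel-verified Lean document; each statement's English description precedes it below -/
import Mathlib

section
/- Let κ = (κ₁,…,κₙ) ∈ ℝⁿ with n ≥ 2, H = Σⱼ κⱼ, K = Σ_{j<k} κⱼκₖ, and for each i let λᵢ = H − κᵢ = Σ_{j≠i} κⱼ. Then for every i, H·λᵢ ≥ K + (n/(2(n-1))) λᵢ². -/
open Finset

/-! With `λ = H - κᵢ = ∑_{j ≠ i} κⱼ` and `Q = ∑_{j ≠ i} κⱼ²`, expanding `H² = 2K + ∑ⱼ κⱼ²`
gives `2 (H λ - K) = λ² + Q`, so the inequality reduces to `λ² ≤ (n - 1) Q`, which is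
Cauchy–Schwarz for the `n - 1` numbers `κⱼ`, `j ≠ i`. -/

theorem sq_sum_eq_two_mul_sum_lt_add_sum_sq {ι R : Type*} [Fintype ι] [LinearOrder ι]
    [CommSemiring R] (f : ι → R) :
    (∑ i, f i) ^ 2 =
      2 * ∑ p ∈ univ.filter (fun p : ι × ι => p.1 < p.2), f p.1 * f p.2
        + ∑ i, f i ^ 2 := by
  have trichotomy (p : ι × ι) : f p.1 * f p.2 =
      (if p.1 < p.2 then f p.1 * f p.2 else 0) + (if p.2 < p.1 then f p.1 * f p.2 else 0)
        + (if p.1 = p.2 then f p.1 * f p.2 else 0) := by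
    rcases lt_trichotomy p.1 p.2 with h | h | h
    · simp [h, h.ne, h.not_gt]
    · simp [h]
    · simp [h, h.ne', h.not_gt]
  have swap : ∑ p ∈ univ.filter (fun p : ι × ι => p.2 < p.1), f p.1 * f p.2
      = ∑ p ∈ univ.filter (fun p : ι × ι => p.1 < p.2), f p.1 * f p.2 :=
    sum_nbij' Prod.swap Prod.swap (by simp) (by simp) (by simp) (by simp) (by simp [mul_comm])
  have diag : ∑ p : ι × ι, (if p.1 = p.2 then f p.1 * f p.2 else 0) = ∑ i, f i ^ 2 := by
    rw [Fintype.sum_prod_type]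
    refine sum_congr rfl fun j _ => ?_
    rw [sum_ite_eq, if_pos (mem_univ j), sq]
  calc (∑ i, f i) ^ 2 = ∑ p : ι × ι, f p.1 * f p.2 := by
        rw [sq, sum_mul_sum, Fintype.sum_prod_type]
    _ = _ := by
        rw [sum_congr rfl fun p _ => trichotomy p, sum_add_distrib, sum_add_distrib, diag,
          ← sum_filter, ← sum_filter, swap]
        ring

theorem two_mul_sum_mul_sub_sub_sum_lt {ι : Type*} [Fintype ι] [LinearOrder ι]
    (κ : ι → ℝ) (i : ι) :
    2 * ((∑ j, κ j) * ((∑ j, κ j) - κ i)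
      - ∑ p ∈ univ.filter (fun p : ι × ι => p.1 < p.2), κ p.1 * κ p.2) =
      ((∑ j, κ j) - κ i) ^ 2 + ∑ j ∈ univ.erase i, κ j ^ 2 := by
  have hsq := sq_sum_eq_two_mul_sum_lt_add_sum_sq κ
  rw [← add_sum_erase _ κ (mem_univ i)] at hsq ⊢
  rw [← add_sum_erase _ (κ · ^ 2) (mem_univ i)] at hsq
  linear_combination hsq

theorem div_two_mul_sub_one_mul_sq_le {m x q : ℝ} (hx : x ^ 2 ≤ (m - 1) * q) (hq : 0 ≤ q) :
    m / (2 * (m - 1)) * x ^ 2 ≤ (x ^ 2 + q) / 2 := by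
  rcases le_or_gt (m - 1) 0 with hm | hm
  · have hx0 : x ^ 2 = 0 :=
      le_antisymm (hx.trans (mul_nonpos_of_nonpos_of_nonneg hm hq)) (sq_nonneg x)
    rw [hx0]
    linarith
  · rw [div_mul_eq_mul_div, div_le_iff₀ (by positivity)]
    nlinarith

theorem huang_wu_inequality_general (n : ℕ) (κ : Fin n → ℝ) (i : Fin n) :
    (∑ j, κ j) * ((∑ j, κ j) - κ i) ≥
      (∑ p ∈ univ.filter (fun p : Fin n × Fin n => p.1 < p.2), κ p.1 * κ p.2)
        + ((n : ℝ) / (2 * ((n : ℝ) - 1))) * ((∑ j, κ j) - κ i) ^ 2 := by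
  have cauchy_schwarz :
      ((∑ j, κ j) - κ i) ^ 2 ≤ ((n : ℝ) - 1) * ∑ j ∈ univ.erase i, κ j ^ 2 := by
    rw [← sum_erase_eq_sub (mem_univ i)]
    simpa [card_erase_of_mem, Nat.cast_sub i.pos] using
      sq_sum_le_card_mul_sum_sq (s := univ.erase i) (f := κ)
  have coefficient_bound :=
    div_two_mul_sub_one_mul_sq_le cauchy_schwarz (sum_nonneg fun j _ => sq_nonneg (κ j))
  linarith [two_mul_sum_mul_sub_sub_sum_lt κ i]

/-- Huang–Wu algebraic inequality: for κ ∈ ℝⁿ (n ≥ 2), H = Σⱼ κⱼ,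
K = Σ_{j<k} κⱼκₖ and λᵢ = H − κᵢ, one has H·λᵢ ≥ K + (n/(2(n-1))) λᵢ². -/
theorem huang_wu_inequality (n : ℕ) (hn : 2 ≤ n) (κ : Fin n → ℝ) (i : Fin n) :
    (∑ j, κ j) * ((∑ j, κ j) - κ i) ≥
      (∑ p ∈ univ.filter (fun p : Fin n × Fin n => p.1 < p.2), κ p.1 * κ p.2)
        + ((n : ℝ) / (2 * ((n : ℝ) - 1))) * ((∑ j, κ j) - κ i) ^ 2 :=
  huang_wu_inequality_general n κ i
end

section
/- Let I, K, A : [0,∞) → ℝ be differentiable with A > 0, A' = A, K' = (n/(n-1))K, and suppose I' ≤ ((n-2)/(n-1)) I + 2J with J ≤ K on [0,∞). Then the function L(t) = (I(t) − (n-1)K(t)) / A(t)^{(n-2)/(n-1)} is monotone nonincreasing on [0,∞). -/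
/-!
With `u = I - (n-1) K` and `α = (n-2)/(n-1)`, the hypotheses give
`u' = I' - n K ≤ α I + 2 K - n K = α u`, while `A' = A` gives `(A ^ α)' = α A ^ α`.
So `u` grows at most like `A ^ α`, and the quotient `u / A ^ α` is nonincreasing.
-/

open Set

theorem antitoneOn_div_of_hasDerivAt {s : Set ℝ} (hs : Convex ℝ s) {u v u' v' : ℝ → ℝ}
    (hu : ∀ t ∈ s, HasDerivAt u (u' t) t) (hv : ∀ t ∈ s, HasDerivAt v (v' t) t)
    (hv_pos : ∀ t ∈ s, 0 < v t) (hle : ∀ t ∈ s, u' t * v t ≤ u t * v' t) :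
    AntitoneOn (fun t => u t / v t) s := by
  have hquot : ∀ t ∈ s,
      HasDerivAt (fun t => u t / v t) ((u' t * v t - u t * v' t) / v t ^ 2) t :=
    fun t ht => (hu t ht).div (hv t ht) (hv_pos t ht).ne'
  exact antitoneOn_of_hasDerivWithinAt_nonpos hs
    (fun t ht => (hquot t ht).continuousAt.continuousWithinAt)
    (fun t ht => (hquot t (interior_subset ht)).hasDerivWithinAt)
    (fun t ht => div_nonpos_of_nonpos_of_nonneg
      (sub_nonpos.2 (hle t (interior_subset ht))) (sq_nonneg _))

theorem HasDerivAt.rpow_const_of_hasDerivAt_self {A : ℝ → ℝ} {t : ℝ}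
    (hA : HasDerivAt A (A t) t) (hA_pos : 0 < A t) (c : ℝ) :
    HasDerivAt (fun s => A s ^ c) (c * A t ^ c) t :=
  (hA.rpow_const (Or.inl hA_pos.ne')).congr_deriv <| by
    rw [Real.rpow_sub_one hA_pos.ne']
    field_simp

theorem antitoneOn_div_rpow_of_deriv_le {s : Set ℝ} (hs : Convex ℝ s) {u u' A : ℝ → ℝ} {c : ℝ}
    (hu : ∀ t ∈ s, HasDerivAt u (u' t) t) (hA : ∀ t ∈ s, HasDerivAt A (A t) t)
    (hA_pos : ∀ t ∈ s, 0 < A t) (hle : ∀ t ∈ s, u' t ≤ c * u t) :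
    AntitoneOn (fun t => u t / A t ^ c) s :=
  antitoneOn_div_of_hasDerivAt hs hu
    (fun t ht => (hA t ht).rpow_const_of_hasDerivAt_self (hA_pos t ht) c)
    (fun t ht => Real.rpow_pos_of_pos (hA_pos t ht) c)
    (fun t ht => by
      have := mul_le_mul_of_nonneg_right (hle t ht) (Real.rpow_pos_of_pos (hA_pos t ht) c).le
      linarith)

/-- ODE monotonicity for L: if A' = A, A > 0, K' = (n/(n-1))K,
I' ≤ ((n-2)/(n-1))I + 2J with J ≤ K on [0,∞), then
L = (I − (n-1)K)/A^{(n-2)/(n-1)} is monotone nonincreasing. -/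
theorem monotone_L (n : ℕ) (hn : 3 ≤ n) (I K A J I' : ℝ → ℝ)
    (hA : ∀ t ∈ Set.Ici (0 : ℝ), HasDerivAt A (A t) t)
    (hApos : ∀ t ∈ Set.Ici (0 : ℝ), 0 < A t)
    (hK : ∀ t ∈ Set.Ici (0 : ℝ), HasDerivAt K (((n : ℝ) / ((n : ℝ) - 1)) * K t) t)
    (hI : ∀ t ∈ Set.Ici (0 : ℝ), HasDerivAt I (I' t) t)
    (hI' : ∀ t ∈ Set.Ici (0 : ℝ),
      I' t ≤ (((n : ℝ) - 2) / ((n : ℝ) - 1)) * I t + 2 * J t)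
    (hJK : ∀ t ∈ Set.Ici (0 : ℝ), J t ≤ K t) :
    AntitoneOn (fun t => (I t - ((n : ℝ) - 1) * K t) /
        A t ^ (((n : ℝ) - 2) / ((n : ℝ) - 1)))
      (Set.Ici 0) := by
  have hn1 : (n : ℝ) - 1 ≠ 0 := by
    have : (3 : ℝ) ≤ n := by exact_mod_cast hn
    linarith
  have hu : ∀ t ∈ Ici (0 : ℝ),
      HasDerivAt (fun t => I t - ((n : ℝ) - 1) * K t) (I' t - n * K t) t :=
    fun t ht => ((hI t ht).sub ((hK t ht).const_mul _)).congr_deriv (by field_simp)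
  refine antitoneOn_div_rpow_of_deriv_le (convex_Ici 0) hu hA hApos fun t ht => ?_
  have hαu : ((n : ℝ) - 2) / ((n : ℝ) - 1) * (I t - ((n : ℝ) - 1) * K t)
      = ((n : ℝ) - 2) / ((n : ℝ) - 1) * I t - ((n : ℝ) - 2) * K t := by
    field_simp
  linarith [hI' t ht, hJK t ht]
end

section
/- Let f : ℍⁿ → ℝ be smooth and satisfy the static equation D²f = f·g₀, where D² is the Hessian and g₀ the hyperbolic metric. Then the vector space of such f is spanned by ρ₀ = cosh r and ρᵢ = (sinh r)θᵢ for i = 1,…,n, where θ : S^{n-1} → ℝⁿ is the standard embedding; in particular this space has dimension n+1. -/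
/-- The Minkowski bilinear form on ℝ^{n+1}. -/
def mink (n : ℕ) (x y : Fin (n + 1) → ℝ) : ℝ :=
  (∑ i : Fin n, x i.succ * y i.succ) - x 0 * y 0

/-- The hyperboloid model of hyperbolic n-space ℍⁿ.  In polar coordinates
(r,θ) on ℍⁿ the point is (cosh r, (sinh r)θ), so the coordinate functions
x ↦ x α restrict on the hyperboloid exactly to ρ₀ = cosh r and
ρᵢ = (sinh r)θᵢ. -/
def Hyperboloid (n : ℕ) : Set (Fin (n + 1) → ℝ) :=
  {x | mink n x x = -1 ∧ 0 < x 0}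

/-- Solution of y' = c y with y 0 = 0 is zero. -/
lemma lin_ode (c : ℝ) (y : ℝ → ℝ) (hy : Differentiable ℝ y)
    (h : ∀ s, deriv y s = c * y s) (h0 : y 0 = 0) (s : ℝ) : y s = 0 := by
  have hexp : Differentiable ℝ (fun t : ℝ => Real.exp (-(c*t))) :=
    Real.differentiable_exp.comp ((differentiable_id.const_mul c).neg)
  have key : ∀ t, deriv (fun t => y t * Real.exp (-(c*t))) t = 0 := by
    intro t
    have h1 : HasDerivAt (fun t : ℝ => Real.exp (-(c*t))) (Real.exp (-(c*t)) * (-c)) t := by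
      have hinner : HasDerivAt (fun t : ℝ => -(c*t)) (-c) t := by
        exact ((hasDerivAt_id t).const_mul c).neg.congr_deriv (by ring)
      exact (Real.hasDerivAt_exp (-(c*t))).comp t hinner
    have h2 := (hy t).hasDerivAt.mul h1
    rw [show (fun t => y t * Real.exp (-(c*t))) = y * (fun t => Real.exp (-(c*t))) from rfl,
      h2.deriv, h t]; ring
  have hconst := is_const_of_deriv_eq_zero (hy.mul hexp) key s 0
  simp only [Pi.mul_apply] at hconst
  rw [h0, zero_mul] at hconst
  rcases mul_eq_zero.mp hconst with h' | h'
  · exact h'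
  · exact absurd h' (Real.exp_ne_zero _)

/-- Solution of u'' = u. -/
lemma ode_lemma (u : ℝ → ℝ) (hu : ContDiff ℝ (⊤ : ℕ∞) u)
    (h : ∀ s, deriv (deriv u) s = u s) (s : ℝ) :
    u s = u 0 * Real.cosh s + deriv u 0 * Real.sinh s := by
  obtain ⟨hud, hu'⟩ := contDiff_infty_iff_deriv.mp (hu.of_le (by simp))
  set a := u 0 with ha
  set b := deriv u 0 with hb
  set w : ℝ → ℝ := fun s => u s - (a * Real.cosh s + b * Real.sinh s) with hw_def
  set W : ℝ → ℝ := fun s => deriv u s - (a * Real.sinh s + b * Real.cosh s) with hW_def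
  have hw : ∀ t, HasDerivAt w (W t) t := fun t =>
    (hud t).hasDerivAt.sub (((Real.hasDerivAt_cosh t).const_mul a).add
      ((Real.hasDerivAt_sinh t).const_mul b))
  have hW : ∀ t, HasDerivAt W (w t) t := by
    intro t
    have h1 : HasDerivAt (deriv u) (u t) t := by
      have := (hu'.differentiable (by simp) t).hasDerivAt
      rwa [h t] at this
    exact h1.sub (((Real.hasDerivAt_sinh t).const_mul a).add
      ((Real.hasDerivAt_cosh t).const_mul b))
  have hv : ∀ t, HasDerivAt (fun t => W t - w t) ((-1) * (W t - w t)) t := by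
    intro t
    have := (hW t).sub (hw t)
    exact this.congr_deriv (by ring)
  have hv0 : W 0 - w 0 = 0 := by simp [hW_def, hw_def, ← hb, ha]
  have hWw : ∀ t, W t - w t = 0 :=
    lin_ode (-1) _ (fun t => (hv t).differentiableAt)
      (fun t => by rw [(hv t).deriv]) hv0
  have hw' : ∀ t, deriv w t = 1 * w t := by
    intro t
    rw [(hw t).deriv]
    have := hWw t
    linarith
  have hw0 : w 0 = 0 := by simp [hw_def, ← ha]
  have := lin_ode 1 w (fun t => (hw t).differentiableAt) hw' hw0 s
  simp only [hw_def] at this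
  linarith

lemma mink_comb (n : ℕ) (A B : ℝ) (p v : Fin (n+1) → ℝ) :
    mink n (A • p + B • v) (A • p + B • v)
      = A^2 * mink n p p + 2*A*B* mink n p v + B^2 * mink n v v := by
  simp only [mink, Pi.add_apply, Pi.smul_apply, smul_eq_mul]
  have : ∀ i : Fin n, (A * p i.succ + B * v i.succ) * (A * p i.succ + B * v i.succ)
      = A^2 * (p i.succ * p i.succ) + (2*A*B)*(p i.succ * v i.succ)
        + B^2 * (v i.succ * v i.succ) := fun i => by ring
  rw [Finset.sum_congr rfl (fun i _ => this i), Finset.sum_add_distrib,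
    Finset.sum_add_distrib, ← Finset.mul_sum, ← Finset.mul_sum, ← Finset.mul_sum]
  ring

/-- geodesics stay on the hyperboloid -/
lemma geodesic_mem (n : ℕ) (p v : Fin (n+1) → ℝ) (hp : p ∈ Hyperboloid n)
    (hv : mink n v v = 1) (hpv : mink n p v = 0) (s : ℝ) :
    (Real.cosh s • p + Real.sinh s • v) ∈ Hyperboloid n := by
  obtain ⟨hm, hpos⟩ := hp
  constructor
  · rw [mink_comb, hm, hv, hpv]
    nlinarith [Real.sinh_sq s, Real.cosh_sq s]
  · have hp0 : p 0 * p 0 = 1 + ∑ i : Fin n, p i.succ * p i.succ := by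
      simp only [mink] at hm; linarith
    have hv0 : v 0 * v 0 = (∑ i : Fin n, v i.succ * v i.succ) - 1 := by
      simp only [mink] at hv; linarith
    have hcs : (∑ i : Fin n, p i.succ * v i.succ)^2
        ≤ (∑ i : Fin n, p i.succ ^ 2) * ∑ i : Fin n, v i.succ ^ 2 :=
      Finset.sum_mul_sq_le_sq_mul_sq _ _ _
    have hpv' : ∑ i : Fin n, p i.succ * v i.succ = p 0 * v 0 := by
      simp only [mink] at hpv; linarith
    have hsq : ∀ g : Fin (n+1) → ℝ, ∑ i : Fin n, g i.succ ^ 2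
        = ∑ i : Fin n, g i.succ * g i.succ :=
      fun g => Finset.sum_congr rfl (fun i _ => sq (g i.succ))
    rw [hpv', hsq p, hsq v] at hcs
    have hkey : v 0 * v 0 + 1 ≤ p 0 * p 0 := by nlinarith
    have habs : |v 0| < p 0 := by
      by_contra hcon
      push_neg at hcon
      nlinarith [sq_abs (v 0), abs_nonneg (v 0), sq (v 0)]
    have hsinh : |Real.sinh s| < Real.cosh s := by
      nlinarith [sq_abs (Real.sinh s), abs_nonneg (Real.sinh s), Real.cosh_pos s,
        Real.cosh_sq s]
    have h1 : Real.sinh s * v 0 ≥ -(|Real.sinh s| * |v 0|) := by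
      rw [← abs_mul]; exact neg_abs_le _
    simp only [Pi.add_apply, Pi.smul_apply, smul_eq_mul]
    nlinarith [abs_nonneg (Real.sinh s), abs_nonneg (v 0), Real.cosh_pos s,
      mul_lt_mul_of_pos_left habs (Real.cosh_pos s),
      mul_le_mul_of_nonneg_right (le_of_lt hsinh) (abs_nonneg (v 0))]

def e0 (n : ℕ) : Fin (n+1) → ℝ := Pi.single 0 1
def es (n : ℕ) (i : Fin n) : Fin (n+1) → ℝ := Pi.single i.succ 1

lemma e0_mem (n : ℕ) : (e0 n) ∈ Hyperboloid n := by
  constructor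
  · simp [mink, e0, Pi.single_apply, Fin.succ_ne_zero]
  · simp [e0, Pi.single_apply]

lemma es_unit (n : ℕ) (i : Fin n) : mink n (es n i) (es n i) = 1 := by
  simp [mink, es, Pi.single_apply, Fin.succ_ne_zero, Fin.succ_inj]

lemma e0_es (n : ℕ) (i : Fin n) : mink n (e0 n) (es n i) = 0 := by
  simp [mink, e0, es, Pi.single_apply, Fin.succ_ne_zero, (Fin.succ_ne_zero i).symm]

lemma decomp (n : ℕ) (x : Fin (n+1) → ℝ) :
    x - x 0 • e0 n = ∑ i : Fin n, x i.succ • es n i := by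
  funext j
  simp only [Pi.sub_apply, Pi.smul_apply, Finset.sum_apply, smul_eq_mul, e0, es, Pi.single_apply]
  refine Fin.cases ?_ (fun k => ?_) j
  · simp [eq_comm, Fin.succ_ne_zero]
  · simp [Fin.succ_ne_zero, Fin.succ_inj]

/-- A smooth f on ℍⁿ satisfies the static equation D²f = f·g₀ iff
(f∘γ)'' = f∘γ along every unit-speed geodesic γ(s) = cosh s·p + sinh s·v.
The space of solutions is spanned by ρ₀ = cosh r and ρᵢ = (sinh r)θᵢ,
i.e. by the n+1 coordinate functions of the hyperboloid model; these are
linearly independent, so the space has dimension n+1. -/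
theorem static_equation_solutions (n : ℕ) (hn : 2 ≤ n)
    (f : (Fin (n + 1) → ℝ) → ℝ) (hf : ContDiff ℝ (⊤ : ℕ∞) f) :
    ((∀ p v : Fin (n + 1) → ℝ, p ∈ Hyperboloid n →
        mink n v v = 1 → mink n p v = 0 → ∀ s : ℝ,
          deriv (deriv fun s => f (Real.cosh s • p + Real.sinh s • v)) s
            = f (Real.cosh s • p + Real.sinh s • v)) ↔
      ∃ c : Fin (n + 1) → ℝ, ∀ x ∈ Hyperboloid n, f x = ∑ α, c α * x α) ∧
    ∀ c : Fin (n + 1) → ℝ, (∀ x ∈ Hyperboloid n, ∑ α, c α * x α = 0) → c = 0 := by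
  constructor
  · constructor
    · -- forward direction
      intro hode
      classical
      refine ⟨fun α => if α = 0 then f (e0 n) else fderiv ℝ f (e0 n) (Pi.single α 1), ?_⟩
      intro x hx
      obtain ⟨hm, hxpos⟩ := hx
      set S : ℝ := ∑ i : Fin n, x i.succ * x i.succ with hS_def
      have hSnonneg : 0 ≤ S := Finset.sum_nonneg fun i _ => mul_self_nonneg _
      have hmS : S - x 0 * x 0 = -1 := hm
      have hsum : ∀ y : Fin (n+1) → ℝ,
          (∑ α, (if α = 0 then f (e0 n) else fderiv ℝ f (e0 n) (Pi.single α 1)) * y α)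
          = f (e0 n) * y 0 + ∑ i : Fin n, fderiv ℝ f (e0 n) (es n i) * y i.succ := by
        intro y
        rw [Fin.sum_univ_succ]
        simp [Fin.succ_ne_zero, es]
      rw [hsum]
      by_cases hS : S = 0
      · -- x = e0
        have hx0 : x 0 = 1 := by nlinarith
        have hxi : ∀ i : Fin n, x i.succ = 0 := by
          intro i
          have := (Finset.sum_eq_zero_iff_of_nonneg
            (fun i _ => mul_self_nonneg (x i.succ))).mp hS i (Finset.mem_univ i)
          nlinarith [this]
        have hxe : x = e0 n := by
          funext j
          refine Fin.cases ?_ (fun k => ?_) j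
          · simp [e0, hx0]
          · simp [e0, hxi k, Pi.single_apply, (Fin.succ_ne_zero k)]
        rw [hxe]
        simp [e0, Pi.single_apply, Fin.succ_ne_zero]
      · have hSpos : 0 < S := lt_of_le_of_ne hSnonneg (Ne.symm hS)
        set σ : ℝ := Real.sqrt S with hσ_def
        have hσpos : 0 < σ := Real.sqrt_pos.mpr hSpos
        have hσsq : σ ^ 2 = S := Real.sq_sqrt hSnonneg
        set v : Fin (n+1) → ℝ := σ⁻¹ • (x - x 0 • e0 n) with hv_def
        have hv0 : v 0 = 0 := by
          simp [hv_def, e0, Pi.single_apply]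
        have hvi : ∀ i : Fin n, v i.succ = σ⁻¹ * x i.succ := by
          intro i
          simp [hv_def, e0, Pi.single_apply, Fin.succ_ne_zero]
        have hvv : mink n v v = 1 := by
          simp only [mink, hv0, hvi, mul_zero, sub_zero]
          have : ∀ i : Fin n, σ⁻¹ * x i.succ * (σ⁻¹ * x i.succ)
              = σ⁻¹ * σ⁻¹ * (x i.succ * x i.succ) := fun i => by ring
          rw [Finset.sum_congr rfl (fun i _ => this i), ← Finset.mul_sum, ← hS_def]
          field_simp
          nlinarith [hσsq]
        have hev : mink n (e0 n) v = 0 := by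
          simp [mink, e0, Pi.single_apply, Fin.succ_ne_zero, hv0]
        set s₀ : ℝ := Real.arsinh σ with hs₀_def
        have hsinh : Real.sinh s₀ = σ := Real.sinh_arsinh σ
        have hcosh : Real.cosh s₀ = x 0 := by
          rw [hs₀_def, Real.cosh_arsinh]
          have h1 : 1 + σ ^ 2 = x 0 * x 0 := by nlinarith
          rw [h1, ← sq]
          exact Real.sqrt_sq hxpos.le
        have hγs₀ : Real.cosh s₀ • e0 n + Real.sinh s₀ • v = x := by
          rw [hcosh, hsinh, hv_def, smul_smul, mul_inv_cancel₀ (ne_of_gt hσpos), one_smul]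
          abel
        set u : ℝ → ℝ := fun s => f (Real.cosh s • e0 n + Real.sinh s • v) with hu_def
        have husmooth : ContDiff ℝ (⊤ : ℕ∞) u := by
          apply hf.comp
          exact (Real.contDiff_cosh.smul contDiff_const).add
            (Real.contDiff_sinh.smul contDiff_const)
        have hodeu : ∀ s, deriv (deriv u) s = u s := hode (e0 n) v (e0_mem n) hvv hev
        have hu0 : u 0 = f (e0 n) := by simp [hu_def]
        have hdu0 : deriv u 0 = fderiv ℝ f (e0 n) v := by
          have hd : HasDerivAt (fun s : ℝ => Real.cosh s • e0 n + Real.sinh s • v) v 0 := by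
            have := ((Real.hasDerivAt_cosh 0).smul_const (e0 n)).add
              ((Real.hasDerivAt_sinh 0).smul_const v)
            simp at this; exact this
          have hF : HasFDerivAt f (fderiv ℝ f (e0 n))
              ((fun s : ℝ => Real.cosh s • e0 n + Real.sinh s • v) 0) := by
            have : (fun s : ℝ => Real.cosh s • e0 n + Real.sinh s • v) 0 = e0 n := by simp
            rw [this]
            exact (hf.differentiable (by simp) (e0 n)).hasFDerivAt
          exact (hF.comp_hasDerivAt 0 hd).deriv
        have hval := ode_lemma u husmooth hodeu s₀
        rw [hu0, hdu0, hsinh, hcosh] at hval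
        have hux : u s₀ = f x := by simp only [hu_def, hγs₀]
        have hfx : f x = f (e0 n) * x 0 + fderiv ℝ f (e0 n) v * σ := by
          rw [← hux]; exact hval
        rw [hfx]
        congr 1
        have hσv : σ • v = x - x 0 • e0 n := by
          rw [hv_def, smul_smul, mul_inv_cancel₀ (ne_of_gt hσpos), one_smul]
        have : fderiv ℝ f (e0 n) v * σ = fderiv ℝ f (e0 n) (σ • v) := by
          rw [(fderiv ℝ f (e0 n)).map_smul, smul_eq_mul, mul_comm, hσv, ← mul_assoc,
            mul_inv_cancel₀ (ne_of_gt hσpos), one_mul]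
        rw [this, hσv, decomp n x, map_sum]
        refine Finset.sum_congr rfl (fun i _ => ?_)
        rw [(fderiv ℝ f (e0 n)).map_smul, smul_eq_mul, mul_comm]
    · -- backward direction
      rintro ⟨c, hc⟩ p v hp hv hpv s
      set A : ℝ := ∑ α, c α * p α with hA
      set B : ℝ := ∑ α, c α * v α with hB
      have hfun : (fun s => f (Real.cosh s • p + Real.sinh s • v))
          = fun s => A * Real.cosh s + B * Real.sinh s := by
        funext t
        rw [hc _ (geodesic_mem n p v hp hv hpv t)]
        simp only [Pi.add_apply, Pi.smul_apply, smul_eq_mul]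
        have : ∀ α, c α * (Real.cosh t * p α + Real.sinh t * v α)
            = (c α * p α) * Real.cosh t + (c α * v α) * Real.sinh t := fun α => by ring
        rw [Finset.sum_congr rfl (fun α _ => this α), Finset.sum_add_distrib,
          ← Finset.sum_mul, ← Finset.sum_mul, ← hA, ← hB]
      have hc' : f (Real.cosh s • p + Real.sinh s • v) = A * Real.cosh s + B * Real.sinh s := by
        have := congrFun hfun s
        simpa using this
      rw [hfun, hc']
      have hD : deriv (fun t => A * Real.cosh t + B * Real.sinh t)
          = fun t => A * Real.sinh t + B * Real.cosh t := by
        funext t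
        exact (((Real.hasDerivAt_cosh t).const_mul A).add
          ((Real.hasDerivAt_sinh t).const_mul B)).deriv
      rw [hD]
      exact (((Real.hasDerivAt_sinh s).const_mul A).add
        ((Real.hasDerivAt_cosh s).const_mul B)).deriv
  · -- linear independence
    intro c hc
    have h0 : c 0 = 0 := by
      have := hc (e0 n) (e0_mem n)
      rw [Fin.sum_univ_succ] at this
      simpa [e0, Pi.single_apply, Fin.succ_ne_zero] using this
    have hsucc : ∀ i : Fin n, c i.succ = 0 := by
      intro i
      have hmem := geodesic_mem n (e0 n) (es n i) (e0_mem n) (es_unit n i) (e0_es n i) 1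
      have := hc _ hmem
      rw [Fin.sum_univ_succ] at this
      simp only [Pi.add_apply, Pi.smul_apply, smul_eq_mul, e0, es, Pi.single_apply] at this
      simp [Fin.succ_ne_zero, eq_comm, Fin.succ_inj, h0, mul_ite,
        Finset.sum_ite_eq'] at this
      rcases this with h | h
      · exact h
      · exact absurd h (Real.sinh_pos_iff.mpr one_pos).ne
    funext α
    refine Fin.cases ?_ (fun i => ?_) α
    · simpa using h0
    · simpa using hsucc i
end

section
/- Let Σ be a geodesic sphere in ℍⁿ (n ≥ 3) of radius r, not necessarily centered at the origin, with B the geodesic ball it bounds. Then ∫_Σ ρ H dΣ = n(n-1) coth²r · ∫_B ρ dV, where ρ = cosh(dist to origin), H = (n-1)coth r is the mean curvature, and dV is hyperbolic volume. -/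
/-! On the hyperboloid, ρ is the linear coordinate `x ↦ x 0`, so on the geodesic sphere of radius
`s` about `q` it equals `cosh s · ρ(q)` plus a linear function of the unit tangent direction, and
the latter integrates to zero over the unit sphere by antipodal symmetry. Hence the sphere integral
of ρ is `cosh s · ρ(q) · |Sⁿ⁻¹|` (the mean value property of the eigenfunction ρ), the ball integral
is `∫₀ʳ sinhⁿ⁻¹ s cosh s ds · ρ(q) |Sⁿ⁻¹| = sinhⁿ r / n · ρ(q) |Sⁿ⁻¹|`, and the identity reduces to
algebra in `coth r`. -/

open MeasureTheory

noncomputable section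

open Real Set Metric

-- For infinite `μ` both sides are junk zeros: `μ.real univ = 0`, and `c + g` is integrable only
-- when `c = 0`.
theorem integral_const_add_of_odd {α : Type*} [MeasurableSpace α] [InvolutiveNeg α]
    [MeasurableNeg α] {μ : Measure α} (hμ : MeasurePreserving Neg.neg μ μ) (c : ℝ)
    {g : α → ℝ} (hg_odd : ∀ x, g (-x) = -g x) (hg_meas : AEStronglyMeasurable g μ)
    (hg_bdd : ∃ C, ∀ᵐ x ∂μ, ‖g x‖ ≤ C) :
    ∫ x, c + g x ∂μ = μ.real univ * c := by
  have hneg := (MeasurableEquiv.neg α).measurableEmbedding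
  by_cases hint : Integrable (fun x => c + g x) μ
  · have hrefl : ∫ x, c + g (-x) ∂μ = ∫ x, c + g x ∂μ :=
      hμ.integral_comp hneg (fun x => c + g x)
    have hint_refl : Integrable (fun x => c + g (-x)) μ := (hμ.integrable_comp_emb hneg).2 hint
    have hsum : ∫ x, (c + g x) + (c + g (-x)) ∂μ = ∫ _, 2 * c ∂μ := by
      congr 1 with x
      rw [hg_odd]
      ring
    rw [integral_add hint hint_refl, hrefl, integral_const, smul_eq_mul] at hsum
    linarith
  · rw [integral_undef hint]
    by_cases hfin : IsFiniteMeasure μ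
    · obtain ⟨C, hC⟩ := hg_bdd
      exact absurd ((integrable_const c).add (Integrable.of_bound hg_meas C hC)) hint
    · simp [Measure.real, not_isFiniteMeasure_iff.1 hfin]

section HausdorffSphere

variable {E : Type*} [NormedAddCommGroup E] [MeasurableSpace E] [BorelSpace E]

theorem measurePreserving_neg_hausdorffMeasure_restrict_sphere (d r : ℝ) :
    MeasurePreserving Neg.neg ((μH[d] : Measure E).restrict (sphere 0 r))
      ((μH[d] : Measure E).restrict (sphere 0 r)) := by
  have h := ((IsometryEquiv.neg E).measurePreserving_hausdorffMeasure d).restrict_preimage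
    (s := sphere (0 : E) r) isClosed_sphere.measurableSet
  rwa [show ⇑(IsometryEquiv.neg E) = Neg.neg from rfl, Set.neg_preimage, neg_sphere,
    neg_zero] at h

theorem integral_sphere_const_add_clm [NormedSpace ℝ E] (d r c : ℝ) (L : E →L[ℝ] ℝ) :
    ∫ w in sphere (0 : E) r, c + L w ∂μH[d] = c * (μH[d] : Measure E).real (sphere 0 r) := by
  rw [integral_const_add_of_odd (measurePreserving_neg_hausdorffMeasure_restrict_sphere d r) c
    (map_neg L) L.continuous.aestronglyMeasurable ⟨‖L‖ * r, ?_⟩,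
    measureReal_restrict_apply_univ, mul_comm]
  filter_upwards [ae_restrict_mem isClosed_sphere.measurableSet] with w hw
  simpa [mem_sphere_zero_iff_norm.1 hw] using L.le_opNorm w

end HausdorffSphere

theorem integral_sinh_pow_mul_cosh (k : ℕ) (a b : ℝ) :
    ∫ x in a..b, sinh x ^ k * cosh x = (sinh b ^ (k + 1) - sinh a ^ (k + 1)) / (k + 1) := by
  rw [← integral_pow]
  exact intervalIntegral.integral_comp_mul_deriv (g := fun u => u ^ k)
    (fun x _ => hasDerivAt_sinh x) continuous_cosh.continuousOn (continuous_pow k)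

/-- The sphere is parametrized by θ ↦ cosh r₀·q + sinh r₀·ι(θ) over the unit sphere of the
tangent space at q (identified with Euclidean ℝⁿ by ι), with area element sinh^{n-1}r₀ dσ and
H = (n-1)coth r₀; the ball integral is written in geodesic polar coordinates about q, and dσ is
the (n-1)-dimensional Hausdorff measure on the unit sphere of ℝⁿ. -/
theorem geodesic_sphere_integral_identity_general (n : ℕ) (hn : 3 ≤ n)
    (r₀ : ℝ) (hr₀ : 0 < r₀)
    (q : Fin (n + 1) → ℝ)
    (ι : EuclideanSpace ℝ (Fin n) →ₗ[ℝ] (Fin (n + 1) → ℝ)) :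
    ((n : ℝ) - 1) * (Real.cosh r₀ / Real.sinh r₀) * Real.sinh r₀ ^ (n - 1) *
        (∫ w in Metric.sphere (0 : EuclideanSpace ℝ (Fin n)) 1,
          (Real.cosh r₀ • q + Real.sinh r₀ • ι w) 0 ∂(μH[((n : ℝ) - 1)]))
      = (n : ℝ) * ((n : ℝ) - 1) * (Real.cosh r₀ / Real.sinh r₀) ^ 2 *
        (∫ s in Set.Ioc (0 : ℝ) r₀, (Real.sinh s ^ (n - 1) *
          ∫ w in Metric.sphere (0 : EuclideanSpace ℝ (Fin n)) 1,
            (Real.cosh s • q + Real.sinh s • ι w) 0 ∂(μH[((n : ℝ) - 1)]))) := by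
  set m := (μH[(n : ℝ) - 1] : Measure (EuclideanSpace ℝ (Fin n))).real (sphere 0 1)
  have hsphere (s : ℝ) : ∫ w in sphere (0 : EuclideanSpace ℝ (Fin n)) 1,
      (cosh s • q + sinh s • ι w) 0 ∂μH[(n : ℝ) - 1] = cosh s * q 0 * m :=
    integral_sphere_const_add_clm _ _ _
      (sinh s • (ContinuousLinearMap.proj 0 ∘L LinearMap.toContinuousLinearMap ι))
  obtain ⟨k, rfl⟩ : ∃ k, n = k + 1 := ⟨n - 1, by omega⟩
  have hradial : ∫ s in Ioc 0 r₀, sinh s ^ k * (cosh s * q 0 * m)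
      = sinh r₀ ^ (k + 1) / (k + 1) * (q 0 * m) := by
    calc ∫ s in Ioc 0 r₀, sinh s ^ k * (cosh s * q 0 * m)
        = (∫ s in 0..r₀, sinh s ^ k * cosh s) * (q 0 * m) := by
          rw [intervalIntegral.integral_of_le hr₀.le, ← integral_mul_const]
          congr 1 with s
          ring
      _ = sinh r₀ ^ (k + 1) / (k + 1) * (q 0 * m) := by
          simp [integral_sinh_pow_mul_cosh]
  have hsinh : sinh r₀ ≠ 0 := (sinh_pos_iff.2 hr₀).ne'
  simp only [hsphere, Nat.add_sub_cancel, hradial]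
  push_cast
  field_simp
  ring

/-- For a geodesic sphere Σ of radius r₀ centered at q ∈ ℍⁿ (not necessarily
the origin), bounding the geodesic ball B, one has
∫_Σ ρ H dΣ = n(n-1) coth²r₀ ∫_B ρ dV.  The sphere is parametrized by
θ ↦ cosh r₀·q + sinh r₀·ι(θ) over the unit sphere of the tangent space at q
(identified with Euclidean ℝⁿ by a linear isometry ι of the Minkowski form
restricted to q^⊥), with area element sinh^{n-1}r₀ dσ, H = (n-1)coth r₀, and
the ball integral written in geodesic polar coordinates about q; dσ is the
(n-1)-dimensional Hausdorff measure on the unit sphere of ℝⁿ. -/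
theorem geodesic_sphere_integral_identity (n : ℕ) (hn : 3 ≤ n)
    (r₀ : ℝ) (hr₀ : 0 < r₀)
    (q : Fin (n + 1) → ℝ) (hq : q ∈ Hyperboloid n)
    (ι : EuclideanSpace ℝ (Fin n) →ₗ[ℝ] (Fin (n + 1) → ℝ))
    (hι : ∀ w w' : EuclideanSpace ℝ (Fin n),
      mink n (ι w) (ι w') = (inner ℝ w w' : ℝ))
    (hιq : ∀ w : EuclideanSpace ℝ (Fin n), mink n q (ι w) = 0) :
    ((n : ℝ) - 1) * (Real.cosh r₀ / Real.sinh r₀) * Real.sinh r₀ ^ (n - 1) *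
        (∫ w in Metric.sphere (0 : EuclideanSpace ℝ (Fin n)) 1,
          (Real.cosh r₀ • q + Real.sinh r₀ • ι w) 0 ∂(μH[((n : ℝ) - 1)]))
      = (n : ℝ) * ((n : ℝ) - 1) * (Real.cosh r₀ / Real.sinh r₀) ^ 2 *
        (∫ s in Set.Ioc (0 : ℝ) r₀, (Real.sinh s ^ (n - 1) *
          ∫ w in Metric.sphere (0 : EuclideanSpace ℝ (Fin n)) 1,
            (Real.cosh s • q + Real.sinh s • ι w) 0 ∂(μH[((n : ℝ) - 1)]))) :=
  geodesic_sphere_integral_identity_general n hn r₀ hr₀ q ι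
end
end
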